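/- Let h(x) = −x·log₂x − (1−x)·log₂(1−x) denote the binary entropy, and let r₁, r₂, s₁, s₂ ∈ [0,1] be such that (r₁+s₁)/2 ≤ 1/2 and (r₂+s₂)/2 ≤ 1/2. If h((r₁+s₁)/2) + h((r₂+s₂)/2) ≥ 1, then r₁ + r₂ + s₁ + s₂ ≥ 0.44. -/

import Mathlib

/-- The binary entropy `h(x) = −x·log₂ x − (1−x)·log₂(1−x)` (with `h(0)=h(1)=0`,
which holds automatically since `Real.logb 2 0 = 0`). -/
noncomputable def binEntropy2 (x : ℝ) : ℝ :=
  -x * Real.logb 2 x - (1 - x) * Real.logb 2 (1 - x)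

/-!
By concavity of `h`, the hypothesis gives `h(t) ≥ 1/2` at the midpoint
`t = (r₁ + r₂ + s₁ + s₂) / 4` of the two arguments, and `t ≤ 1/2`, where `h` is increasing.
So it suffices that `h(0.11) ≤ 1/2`, i.e. `100¹⁰⁰ ≤ 2⁵⁰ · 11¹¹ · 89⁸⁹`, which is checked exactly.
-/

open Real Set

lemma binEntropy2_eq_binEntropy_div_log_two (x : ℝ) :
    binEntropy2 x = binEntropy x / log 2 := by
  rw [binEntropy2, binEntropy, logb, logb, log_inv, log_inv]
  ring

namespace Real

lemma binEntropy_add_binEntropy_le_two_mul_binEntropy_midpoint {x y : ℝ}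
    (hx : x ∈ Icc (0 : ℝ) 1) (hy : y ∈ Icc (0 : ℝ) 1) :
    binEntropy x + binEntropy y ≤ 2 * binEntropy ((x + y) / 2) := by
  have h := strictConcave_binEntropy.concaveOn.2 hx hy (by norm_num : (0 : ℝ) ≤ 1 / 2)
    (by norm_num : (0 : ℝ) ≤ 1 / 2) (by norm_num)
  rw [smul_eq_mul, smul_eq_mul, smul_eq_mul, smul_eq_mul,
    show (1 / 2 : ℝ) * x + 1 / 2 * y = (x + y) / 2 by ring] at h
  linarith

lemma hundred_mul_binEntropy_eleven_div_hundred :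
    100 * binEntropy (11 / 100) = 100 * log 100 - 11 * log 11 - 89 * log 89 := by
  rw [binEntropy, inv_div, show (1 : ℝ) - 11 / 100 = 89 / 100 by norm_num, inv_div,
    log_div (by norm_num) (by norm_num), log_div (by norm_num) (by norm_num)]
  ring

lemma binEntropy_eleven_div_hundred_le : binEntropy (11 / 100) ≤ log 2 / 2 := by
  have hpow : (100 : ℝ) ^ 100 ≤ 2 ^ 50 * 11 ^ 11 * 89 ^ 89 := by norm_num
  have hlog := log_le_log (by positivity) hpow
  rw [log_pow, log_mul (by positivity) (by positivity), log_mul (by positivity) (by positivity),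
    log_pow, log_pow, log_pow] at hlog
  push_cast at hlog
  linarith [hundred_mul_binEntropy_eleven_div_hundred]

end Real

/-- If `r₁, r₂, s₁, s₂ ∈ [0,1]` with `(r₁+s₁)/2 ≤ 1/2`, `(r₂+s₂)/2 ≤ 1/2` satisfy
the entropic relation `h((r₁+s₁)/2) + h((r₂+s₂)/2) ≥ 1`, then
`r₁ + r₂ + s₁ + s₂ ≥ 0.44`. -/
theorem icp_quantitative_bound (r₁ r₂ s₁ s₂ : ℝ)
    (hr₁ : r₁ ∈ Set.Icc (0 : ℝ) 1) (hr₂ : r₂ ∈ Set.Icc (0 : ℝ) 1)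
    (hs₁ : s₁ ∈ Set.Icc (0 : ℝ) 1) (hs₂ : s₂ ∈ Set.Icc (0 : ℝ) 1)
    (h1 : (r₁ + s₁) / 2 ≤ 1 / 2) (h2 : (r₂ + s₂) / 2 ≤ 1 / 2)
    (hh : 1 ≤ binEntropy2 ((r₁ + s₁) / 2) + binEntropy2 ((r₂ + s₂) / 2)) :
    0.44 ≤ r₁ + r₂ + s₁ + s₂ := by
  set x := (r₁ + s₁) / 2 with hx_def
  set y := (r₂ + s₂) / 2 with hy_def
  have hx : x ∈ Icc (0 : ℝ) 1 := ⟨by linarith [hr₁.1, hs₁.1], by linarith⟩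
  have hy : y ∈ Icc (0 : ℝ) 1 := ⟨by linarith [hr₂.1, hs₂.1], by linarith⟩
  have hsum : log 2 ≤ binEntropy x + binEntropy y := by
    rwa [binEntropy2_eq_binEntropy_div_log_two, binEntropy2_eq_binEntropy_div_log_two,
      ← add_div, le_div_iff₀ (log_pos one_lt_two), one_mul] at hh
  have hmid : log 2 / 2 ≤ binEntropy ((x + y) / 2) := by
    linarith [binEntropy_add_binEntropy_le_two_mul_binEntropy_midpoint hx hy]
  by_contra! hlt
  have hmid_lt : (x + y) / 2 < 11 / 100 := by linarith
  have hmono := binEntropy_strictMonoOn ⟨by linarith [hx.1, hy.1], by linarith⟩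
    ⟨by norm_num, by norm_num⟩ hmid_lt
  linarith [binEntropy_eleven_div_hundred_le]
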